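/- For 0 < q < 1, real a, and every nonnegative integer k, the series η_k(a;q) := ∑_{n=0}^∞ (-1)^n q^{n(n-1)/2} · ((1 - aq^{2n+1})/(1 - aq)) · ((aq;q)_n/(q;q)_n) · (q^{-n} + aq^{n+1})^k converges absolutely and equals 0 (assuming aq ≠ 1). -/

import Mathlib

/-!
Write `w_n(a)` for the weights times `1 - aq`, so that `η_k(a) (1 - aq) = ∑ w_n(a) μ(n;a)^k`.
Absolute convergence holds because the Gaussian factor `q^{n(n-1)/2}` beats the geometric
growth of `(aq;q)_n / (q;q)_n` and of `μ(n;a)^k`, as `|μ(n;a)| ≤ (1 + |a|) q^{-n}`.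

For `k = 0` the series telescopes:
`∑_{n ≤ N} w_n(a) = (-1)^N q^{N(N+1)/2} (aq;q)_{N+1} / (q;q)_N → 0`.
For the induction on `k` (for all `a` at once) the key identity is
`w_{n+1}(a) (μ(n+1;a) - (1 + aq)) = -q⁻¹ (1 - aq)(1 - aq²) w_n(aq²)`, which together with
`μ(n+1;a) = μ(n;aq²) / q` gives the recursion
`η_{k+1}(a) = (1 + aq) η_k(a) - q^{-k-1} (1 - aq²)(1 - aq³) η_k(aq²)`.
-/

open Finset Filter

/-- The finite q-Pochhammer symbol `(x;q)_n = ∏_{k=0}^{n-1} (1 - x q^k)`. -/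
noncomputable def qp (q x : ℝ) (n : ℕ) : ℝ := ∏ k ∈ Finset.range n, (1 - x * q ^ k)

lemma qp_succ (q x : ℝ) (n : ℕ) : qp q x (n + 1) = qp q x n * (1 - x * q ^ n) :=
  prod_range_succ _ _

lemma qp_succ' (q x : ℝ) (n : ℕ) : qp q x (n + 1) = (1 - x) * qp q (x * q) n := by
  rw [qp, qp, prod_range_succ', mul_comm]
  simp [pow_succ, mul_assoc, mul_comm q]

lemma abs_one_sub_mul_pow_le {q : ℝ} (hq : |q| ≤ 1) (x : ℝ) (m : ℕ) :
    |1 - x * q ^ m| ≤ 1 + |x| := by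
  calc |1 - x * q ^ m| ≤ |1| + |x| * |q| ^ m := by
        rw [← abs_pow, ← abs_mul]
        exact abs_sub _ _
    _ ≤ 1 + |x| := by
      rw [abs_one]
      gcongr
      exact mul_le_of_le_one_right (abs_nonneg x) (pow_le_one₀ (abs_nonneg q) hq)

lemma abs_qp_le {q : ℝ} (hq : |q| ≤ 1) (x : ℝ) (n : ℕ) : |qp q x n| ≤ (1 + |x|) ^ n := by
  rw [qp, abs_prod]
  exact (prod_le_prod (fun _ _ ↦ abs_nonneg _) fun k _ ↦ abs_one_sub_mul_pow_le hq x k).trans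
    (by simp)

lemma abs_qp_mul_le {q : ℝ} (hq : |q| ≤ 1) (a : ℝ) (n : ℕ) :
    |qp q (a * q) n| ≤ (1 + |a|) ^ n := by
  refine (abs_qp_le hq _ n).trans (pow_le_pow_left₀ (by positivity) ?_ n)
  rw [abs_mul]
  gcongr
  exact mul_le_of_le_one_right (abs_nonneg a) hq

lemma pow_one_sub_le_qp_self {q : ℝ} (hq0 : 0 ≤ q) (hq1 : q ≤ 1) (n : ℕ) :
    (1 - q) ^ n ≤ qp q q n := by
  calc (1 - q) ^ n = ∏ _k ∈ range n, (1 - q) := by simp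
    _ ≤ qp q q n := prod_le_prod (fun _ _ ↦ by linarith) fun k _ ↦ by
        nlinarith [pow_le_one₀ hq0 hq1 (n := k)]

lemma one_sub_mul_pow_pos {q : ℝ} (hq0 : 0 ≤ q) (hq1 : q < 1) (n : ℕ) :
    0 < 1 - q * q ^ n := by
  rw [← pow_succ', sub_pos]
  exact pow_lt_one₀ hq0 hq1 n.succ_ne_zero

lemma qp_self_pos {q : ℝ} (hq0 : 0 ≤ q) (hq1 : q < 1) (n : ℕ) : 0 < qp q q n :=
  (pow_pos (by linarith) n).trans_le (pow_one_sub_le_qp_self hq0 hq1.le n)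

lemma mul_succ_div_two (n : ℕ) : n * (n + 1) / 2 = n * (n - 1) / 2 + n := by
  simpa [mul_comm] using Nat.triangle_succ n

lemma summable_pow_triangle_mul_pow {q : ℝ} (hq : |q| < 1) (R : ℝ) :
    Summable fun n : ℕ ↦ q ^ (n * (n - 1) / 2) * R ^ n := by
  have hsmall : ∀ᶠ n : ℕ in atTop, |q| ^ n * |R| ≤ 1 / 2 := by
    have := (tendsto_pow_atTop_nhds_zero_of_lt_one (abs_nonneg q) hq).mul_const |R|
    exact (zero_mul |R| ▸ this).eventually_le_const (by norm_num)
  refine summable_of_ratio_norm_eventually_le (r := 1 / 2) (by norm_num) ?_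
  filter_upwards [hsmall] with n hn
  simp only [Real.norm_eq_abs, Nat.triangle_succ, abs_mul, abs_pow, pow_add, pow_succ]
  calc |q| ^ (n * (n - 1) / 2) * |q| ^ n * (|R| ^ n * |R|)
      = (|q| ^ n * |R|) * (|q| ^ (n * (n - 1) / 2) * |R| ^ n) := by ring
    _ ≤ 1 / 2 * (|q| ^ (n * (n - 1) / 2) * |R| ^ n) := by gcongr

/-- `μ(n;a)` -/
noncomputable def qLattice (q a : ℝ) (n : ℕ) : ℝ := q ^ (-(n : ℤ)) + a * q ^ (n + 1)

/-- `w_n(a)`: the weight of `η_k(a;q)` times `1 - aq`, which keeps the recursion in `a` free of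
the division by `1 - aq`. -/
noncomputable def etaWeight (q a : ℝ) (n : ℕ) : ℝ :=
  (-1) ^ n * q ^ (n * (n - 1) / 2) * (1 - a * q ^ (2 * n + 1)) * (qp q (a * q) n / qp q q n)

lemma qLattice_zero (q a : ℝ) : qLattice q a 0 = 1 + a * q := by simp [qLattice]

lemma qLattice_succ {q : ℝ} (hq : q ≠ 0) (a : ℝ) (n : ℕ) :
    qLattice q a (n + 1) = qLattice q (a * q ^ 2) n / q := by
  simp only [qLattice, zpow_neg, zpow_natCast]
  field_simp
  ring

lemma abs_qLattice_le {q : ℝ} (hq0 : 0 < q) (hq1 : q ≤ 1) (a : ℝ) (n : ℕ) :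
    |qLattice q a n| ≤ (1 + |a|) * q⁻¹ ^ n := by
  have hinv : 1 ≤ q⁻¹ ^ n := one_le_pow₀ (one_le_inv₀ hq0 |>.mpr hq1)
  calc |qLattice q a n| ≤ q⁻¹ ^ n + |a| * q ^ (n + 1) := by
        rw [qLattice, zpow_neg, zpow_natCast, ← inv_pow]
        refine (abs_add_le _ _).trans_eq ?_
        rw [abs_of_pos (by positivity : 0 < q⁻¹ ^ n), abs_mul, abs_of_pos (pow_pos hq0 _)]
    _ ≤ q⁻¹ ^ n + |a| * q⁻¹ ^ n := by
        gcongr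
        exact (pow_le_one₀ hq0.le hq1).trans hinv
    _ = (1 + |a|) * q⁻¹ ^ n := by ring

lemma abs_etaWeight_le {q : ℝ} (hq0 : 0 ≤ q) (hq1 : q < 1) (a : ℝ) (n : ℕ) :
    |etaWeight q a n| ≤ (1 + |a|) * (q ^ (n * (n - 1) / 2) * ((1 + |a|) / (1 - q)) ^ n) := by
  have hq : |q| ≤ 1 := by rw [abs_of_nonneg hq0]; exact hq1.le
  rw [etaWeight, abs_mul, abs_mul, abs_mul, abs_div, abs_pow, abs_neg, abs_one, one_pow, one_mul,
    abs_of_nonneg (pow_nonneg hq0 _), abs_of_pos (qp_self_pos hq0 hq1 n), div_pow]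
  calc q ^ (n * (n - 1) / 2) * |1 - a * q ^ (2 * n + 1)| * (|qp q (a * q) n| / qp q q n)
      ≤ q ^ (n * (n - 1) / 2) * (1 + |a|) * ((1 + |a|) ^ n / (1 - q) ^ n) := by
        gcongr
        · exact div_nonneg (abs_nonneg _) (qp_self_pos hq0 hq1 n).le
        · exact abs_one_sub_mul_pow_le hq a _
        · exact abs_qp_mul_le hq a n
        · exact pow_one_sub_le_qp_self hq0 hq1.le n
    _ = _ := by ring

lemma abs_etaWeight_mul_qLattice_pow_le {q : ℝ} (hq0 : 0 < q) (hq1 : q < 1) (a : ℝ)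
    (k n : ℕ) :
    |etaWeight q a n * qLattice q a n ^ k| ≤
      (1 + |a|) ^ (k + 1) * (q ^ (n * (n - 1) / 2) * ((1 + |a|) / (1 - q) * q⁻¹ ^ k) ^ n) := by
  rw [abs_mul, abs_pow]
  calc |etaWeight q a n| * |qLattice q a n| ^ k
      ≤ (1 + |a|) * (q ^ (n * (n - 1) / 2) * ((1 + |a|) / (1 - q)) ^ n) *
          ((1 + |a|) * q⁻¹ ^ n) ^ k := by
        gcongr
        · exact abs_etaWeight_le hq0.le hq1 a n
        · exact abs_qLattice_le hq0 hq1.le a n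
    _ = _ := by
        rw [mul_pow, mul_pow, ← pow_mul, ← pow_mul, mul_comm n k, pow_mul, pow_succ]
        ring

lemma summable_abs_etaWeight_mul_qLattice_pow {q : ℝ} (hq0 : 0 < q) (hq1 : q < 1) (a : ℝ)
    (k : ℕ) : Summable fun n ↦ |etaWeight q a n * qLattice q a n ^ k| :=
  .of_nonneg_of_le (fun _ ↦ abs_nonneg _) (abs_etaWeight_mul_qLattice_pow_le hq0 hq1 a k)
    ((summable_pow_triangle_mul_pow (abs_lt.mpr ⟨by linarith, hq1⟩) _).mul_left _)

lemma sum_range_succ_etaWeight {q : ℝ} (hq0 : 0 ≤ q) (hq1 : q < 1) (a : ℝ) (N : ℕ) :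
    ∑ n ∈ range (N + 1), etaWeight q a n =
      (-1) ^ N * q ^ (N * (N + 1) / 2) * qp q (a * q) (N + 1) / qp q q N := by
  induction N with
  | zero => simp [etaWeight, qp]
  | succ N ih =>
    have hN := (qp_self_pos hq0 hq1 N).ne'
    have hfactor := (one_sub_mul_pow_pos hq0 hq1 N).ne'
    have htri := mul_succ_div_two (N + 1)
    rw [Nat.add_sub_cancel] at htri
    rw [sum_range_succ, ih, etaWeight, htri, qp_succ q q N, qp_succ q (a * q) (N + 1)]
    simp only [Nat.add_sub_cancel, mul_comm (N + 1) N]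
    field_simp
    ring

lemma hasSum_etaWeight {q : ℝ} (hq0 : 0 < q) (hq1 : q < 1) (a : ℝ) :
    HasSum (etaWeight q a) 0 := by
  have hsum : Summable fun n ↦ ‖etaWeight q a n‖ := by
    simpa using summable_abs_etaWeight_mul_qLattice_pow hq0 hq1 a 0
  have hbound : ∀ N : ℕ,
      ‖(-1) ^ N * q ^ (N * (N + 1) / 2) * qp q (a * q) (N + 1) / qp q q N‖ ≤
      (1 + |a|) * (q ^ (N * (N - 1) / 2) * ((1 + |a|) / (1 - q) * q) ^ N) := by
    intro N
    have hq : |q| ≤ 1 := by rw [abs_of_pos hq0]; exact hq1.le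
    rw [norm_div, norm_mul, norm_mul, norm_pow, norm_neg, norm_one, one_pow, one_mul,
      Real.norm_of_nonneg (pow_nonneg hq0.le _), Real.norm_of_nonneg (qp_self_pos hq0.le hq1 N).le,
      Real.norm_eq_abs]
    calc q ^ (N * (N + 1) / 2) * |qp q (a * q) (N + 1)| / qp q q N
        ≤ q ^ (N * (N + 1) / 2) * (1 + |a|) ^ (N + 1) / (1 - q) ^ N := by
          gcongr
          · exact abs_qp_mul_le hq a (N + 1)
          · exact pow_one_sub_le_qp_self hq0.le hq1.le N
      _ = _ := by rw [mul_succ_div_two, pow_add, div_mul_eq_mul_div, div_pow, mul_pow]; ring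
  have hlim := ((summable_pow_triangle_mul_pow (abs_lt.mpr ⟨by linarith, hq1⟩)
    ((1 + |a|) / (1 - q) * q)).mul_left (1 + |a|)).tendsto_atTop_zero
  rw [hasSum_iff_tendsto_nat_of_summable_norm hsum, ← tendsto_add_atTop_iff_nat 1]
  simp only [sum_range_succ_etaWeight hq0.le hq1]
  exact squeeze_zero_norm hbound hlim

lemma qLattice_succ_sub {q : ℝ} (hq : q ≠ 0) (a : ℝ) (m : ℕ) :
    qLattice q a (m + 1) - (1 + a * q) = (1 - q * q ^ m) * (1 - a * q ^ (m + 2)) / q ^ (m + 1) := by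
  simp only [qLattice, zpow_neg, zpow_natCast]
  field_simp
  ring

lemma qp_mul_succ_mul (q a : ℝ) (m : ℕ) :
    qp q (a * q) (m + 1) * (1 - a * q ^ (m + 2)) =
      (1 - a * q) * (1 - a * q ^ 2) * qp q (a * q ^ 2 * q) m := by
  rw [show a * q ^ (m + 2) = a * q * q ^ (m + 1) by ring, ← qp_succ, qp_succ', qp_succ']
  ring_nf

lemma etaWeight_succ_mul_qLattice_sub {q : ℝ} (hq0 : 0 < q) (hq1 : q < 1) (a : ℝ) (m : ℕ) :
    etaWeight q a (m + 1) * (qLattice q a (m + 1) - (1 + a * q)) =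
      -((1 - a * q) * (1 - a * q ^ 2) / q) * etaWeight q (a * q ^ 2) m := by
  have hqm := (qp_self_pos hq0.le hq1 m).ne'
  have hfactor := (one_sub_mul_pow_pos hq0.le hq1 m).ne'
  rw [qLattice_succ_sub hq0.ne', etaWeight, etaWeight, Nat.add_sub_cancel, mul_comm (m + 1) m,
    mul_succ_div_two, qp_succ q q m]
  calc _ = (-1) ^ (m + 1) * q ^ (m * (m - 1) / 2 + m) * (1 - a * q ^ (2 * (m + 1) + 1)) *
        (qp q (a * q) (m + 1) * (1 - a * q ^ (m + 2))) / (qp q q m * q ^ (m + 1)) := by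
        field_simp
    _ = _ := by
        rw [qp_mul_succ_mul]
        field_simp
        ring

lemma etaWeight_mul_qLattice_pow_succ {q : ℝ} (hq0 : 0 < q) (hq1 : q < 1) (a : ℝ) (k m : ℕ) :
    etaWeight q a (m + 1) * qLattice q a (m + 1) ^ (k + 1) =
      (1 + a * q) * (etaWeight q a (m + 1) * qLattice q a (m + 1) ^ k) -
        (1 - a * q) * (1 - a * q ^ 2) / q ^ (k + 1) *
          (etaWeight q (a * q ^ 2) m * qLattice q (a * q ^ 2) m ^ k) := by
  have hsplit : etaWeight q a (m + 1) * qLattice q a (m + 1) ^ (k + 1) =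
      (1 + a * q) * (etaWeight q a (m + 1) * qLattice q a (m + 1) ^ k) +
        etaWeight q a (m + 1) * (qLattice q a (m + 1) - (1 + a * q)) *
          qLattice q a (m + 1) ^ k := by ring
  rw [hsplit, etaWeight_succ_mul_qLattice_sub hq0 hq1, qLattice_succ hq0.ne', div_pow, pow_succ q k]
  field_simp
  ring

lemma hasSum_etaWeight_mul_qLattice_pow {q : ℝ} (hq0 : 0 < q) (hq1 : q < 1) (k : ℕ) (a : ℝ) :
    HasSum (fun n ↦ etaWeight q a n * qLattice q a n ^ k) 0 := by
  induction k generalizing a with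
  | zero => simpa using hasSum_etaWeight hq0 hq1 a
  | succ k ih =>
    rw [← hasSum_nat_add_iff' 1]
    have htail := (hasSum_nat_add_iff' 1).mpr (ih a)
    convert (htail.mul_left (1 + a * q)).sub ((ih (a * q ^ 2)).mul_left
      ((1 - a * q) * (1 - a * q ^ 2) / q ^ (k + 1))) using 1
    · exact funext fun m ↦ etaWeight_mul_qLattice_pow_succ hq0 hq1 a k m
    · simp only [range_one, sum_singleton, qLattice_zero, pow_succ, pow_zero, one_mul, zero_sub,
        mul_neg, mul_zero, sub_zero, neg_inj]
      ring

theorem eta_k_vanishes_general (q a : ℝ) (hq0 : 0 < q) (hq1 : q < 1) (k : ℕ) :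
    Summable (fun n : ℕ =>
        |(-1 : ℝ) ^ n * q ^ (n * (n - 1) / 2) *
          ((1 - a * q ^ (2 * n + 1)) / (1 - a * q)) *
          (qp q (a * q) n / qp q q n) *
          (q ^ (-(n : ℤ)) + a * q ^ (n + 1)) ^ k|) ∧
    HasSum (fun n : ℕ =>
        (-1 : ℝ) ^ n * q ^ (n * (n - 1) / 2) *
          ((1 - a * q ^ (2 * n + 1)) / (1 - a * q)) *
          (qp q (a * q) n / qp q q n) *
          (q ^ (-(n : ℤ)) + a * q ^ (n + 1)) ^ k)
      0 := by
  have hterm : ∀ n : ℕ,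
      (-1 : ℝ) ^ n * q ^ (n * (n - 1) / 2) * ((1 - a * q ^ (2 * n + 1)) / (1 - a * q)) *
          (qp q (a * q) n / qp q q n) * (q ^ (-(n : ℤ)) + a * q ^ (n + 1)) ^ k =
        etaWeight q a n * qLattice q a n ^ k / (1 - a * q) := fun n ↦ by
    rw [etaWeight, qLattice]
    ring
  simp only [hterm, abs_div]
  exact ⟨(summable_abs_etaWeight_mul_qLattice_pow hq0 hq1 a k).div_const _,
    by simpa using (hasSum_etaWeight_mul_qLattice_pow hq0 hq1 k a).div_const (1 - a * q)⟩

/-- All the moments `η_k(a;q)` (A.8) of the signed measure with weights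
`(-1)^n q^{n(n-1)/2} (1-aq^{2n+1})(aq;q)_n/((1-aq)(q;q)_n)` against powers of the
lattice `μ(n;a)=q^{-n}+aq^{n+1}` converge absolutely and vanish. -/
theorem eta_k_vanishes (q a : ℝ) (hq0 : 0 < q) (hq1 : q < 1)
    (h : a * q ≠ 1) (k : ℕ) :
    Summable (fun n : ℕ =>
        |(-1 : ℝ) ^ n * q ^ (n * (n - 1) / 2) *
          ((1 - a * q ^ (2 * n + 1)) / (1 - a * q)) *
          (qp q (a * q) n / qp q q n) *
          (q ^ (-(n : ℤ)) + a * q ^ (n + 1)) ^ k|) ∧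
    HasSum (fun n : ℕ =>
        (-1 : ℝ) ^ n * q ^ (n * (n - 1) / 2) *
          ((1 - a * q ^ (2 * n + 1)) / (1 - a * q)) *
          (qp q (a * q) n / qp q q n) *
          (q ^ (-(n : ℤ)) + a * q ^ (n + 1)) ^ k)
      0 :=
  eta_k_vanishes_general q a hq0 hq1 k
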